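/- Let Ω be a commutative semigroup and (D, (≺_{α,β}), (≻_{α,β})) an Ω-dendriform algebra. Define x ∘_{α,β} y := x ≻_{α,β} y − y ≺_{β,α} x. Then (D, (∘_{α,β})) is an Ω-pre-Lie algebra, i.e., (x∘_{α,β}y)∘_{αβ,γ}z − x∘_{α,βγ}(y∘_{β,γ}z) = (y∘_{β,α}x)∘_{βα,γ}z − y∘_{β,αγ}(x∘_{α,γ}z) for all x,y,z∈D and α,β,γ∈Ω. -/
import Mathlib


/-- `x ∘_{α,β} y = x ≻_{α,β} y − y ≺_{β,α} x`. -/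
def dendCirc {k Ω D : Type*} [Field k] [Mul Ω] [AddCommGroup D] [Module k D]
    (pre post : Ω → Ω → D →ₗ[k] D →ₗ[k] D) (α β : Ω) (x y : D) : D :=
  post α β x y - pre β α y x

/-- An Ω-dendriform algebra gives an Ω-pre-Lie algebra via
`x ∘_{α,β} y = x ≻_{α,β} y − y ≺_{β,α} x`. -/
theorem omegaDendriform_omega_preLie
    {k Ω D : Type*} [Field k] [CommSemigroup Ω] [AddCommGroup D] [Module k D]
    (pre post : Ω → Ω → D →ₗ[k] D →ₗ[k] D)
    (h1 : ∀ (α β γ : Ω) (x y z : D),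
      pre (α * β) γ (pre α β x y) z = pre α (β * γ) x (pre β γ y z + post β γ y z))
    (h2 : ∀ (α β γ : Ω) (x y z : D),
      pre (α * β) γ (post α β x y) z = post α (β * γ) x (pre β γ y z))
    (h3 : ∀ (α β γ : Ω) (x y z : D),
      post (α * β) γ (pre α β x y + post α β x y) z = post α (β * γ) x (post β γ y z)) :
    ∀ (α β γ : Ω) (x y z : D),
      dendCirc pre post (α * β) γ (dendCirc pre post α β x y) z
        - dendCirc pre post α (β * γ) x (dendCirc pre post β γ y z)
      = dendCirc pre post (β * α) γ (dendCirc pre post β α y x) z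
        - dendCirc pre post β (α * γ) y (dendCirc pre post α γ x z) := by
  intro α β γ x y z
  -- e3 : left-nested ≻≻ rewritten to right-nested form
  have e3 : ∀ (a b c : Ω) (u v w : D),
      post (a*b) c (post a b u v) w
        = post a (b*c) u (post b c v w) - post (a*b) c (pre a b u v) w := by
    intro a b c u v w
    have h := h3 a b c u v w
    simp only [map_add, LinearMap.add_apply] at h
    rw [eq_sub_iff_add_eq, add_comm]
    exact h
  -- e1' : ≺ of ≻ rewritten
  have e1' : ∀ (a b c : Ω) (u v w : D),
      pre c (a*b) w (post a b u v)
        = pre (c*a) b (pre c a w u) v - pre c (a*b) w (pre a b u v) := by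
    intro a b c u v w
    have h := h1 c a b w u v
    simp only [map_add] at h
    rw [eq_sub_iff_add_eq, add_comm]
    exact h.symm
  have f2 : post α (β*γ) x (pre γ β z y) = pre (α*γ) β (post α γ x z) y := by
    rw [mul_comm β γ]; exact (h2 α γ β x z y).symm
  have f2' : pre (β*γ) α (post β γ y z) x = post β (α*γ) y (pre γ α z x) := by
    rw [mul_comm α γ]; exact h2 β γ α y z x
  simp only [dendCirc, map_sub, LinearMap.sub_apply]
  rw [e3 α β γ x y z, e3 β α γ y x z, e1' α β γ x y z, e1' β α γ y x z, f2, ← f2']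
  simp only [mul_comm α β, mul_comm γ α, mul_comm γ β]
  abel
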